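/- arXiv:2605.21471 — 2 statements merged into one kernel-verified Lean document; each statement's English description precedes it below -/
import Mathlib

section
/- For every graph H on k vertices there exists η > 0 such that for every n sufficiently large, every graph G on n vertices with e(G) ≥ (1-η)·binom(n,2), every balanced partition V(G) = A ∪ B with |A| = |B| = n/2, and every 2-colouring of the edges of G with colours red and blue, there exist at least η·n^k subgraphs H' of G isomorphic to H such that either H' is monochromatic red and |V(H') ∩ A| ≥ α(H), or H' is monochromatic blue and |V(H') ∩ B| ≥ α(H). -/
open SimpleGraph

open scoped Classical in
/-- The independence number of a finite graph. -/
noncomputable def indepNum {V : Type*} [Fintype V] (H : SimpleGraph V) : ℕ :=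
  Nat.findGreatest (fun m => ∃ s : Finset V, s.card = m ∧
    ∀ x ∈ s, ∀ y ∈ s, x ≠ y → ¬ H.Adj x y) (Fintype.card V)

/-!
Let `k = |V(H)|`, `T = k·2^k`, and let `M ≥ R(T, T)`. There are at
least `2η n^{2M}` pairs `(S₁, S₂)` of `M`-subsets of `A` and of `Aᶜ`, and a non-edge of `G` lies
in at most `n^{2M-2}` of them, so at least `η n^{2M}` pairs span a clique of `G`. Each such
clique contains a good copy of `H`. A red `K_T` in `S₁` or a blue `K_T` in `S₂` contains one
outright. Otherwise `S₁` holds a blue `K_T` and `S₂` a red `K_T`; sorting `k` vertices of the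
red clique by the colour of their (monochromatic) stars to a common `k`-subset of the blue one
yields either `k - α(H)` red vertices joined in red to `k` vertices of `A`, or `α(H)` vertices of
`Aᶜ` joined in blue to a blue `K_k`. Embedding a maximum independent set of `H` into the part
that is not a clique gives the copy. A copy spans `k` vertices, so it comes from at most
`n^{2M-k}` pairs, which leaves at least `η n^k` good copies.
-/

open Finset

universe u

open scoped Classical in
theorem indepNum_le_card {W : Type*} [Fintype W] (H : SimpleGraph W) :
    _root_.indepNum H ≤ Fintype.card W :=
  Nat.findGreatest_le _

open scoped Classical in
theorem exists_isIndepSet_card_eq_indepNum {W : Type*} [Fintype W] (H : SimpleGraph W) :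
    ∃ I : Finset W, H.IsIndepSet I ∧ #I = _root_.indepNum H := by
  obtain ⟨I, hcard, hI⟩ := Nat.findGreatest_spec (P := fun m ↦ ∃ s : Finset W, #s = m ∧
    ∀ x ∈ s, ∀ y ∈ s, x ≠ y → ¬ H.Adj x y) (Nat.zero_le _) ⟨∅, by simp⟩
  exact ⟨I, fun x hx y hy hxy ↦ hI x hx y hy hxy, hcard⟩

theorem exists_ramsey_bound (r : Bool → ℕ) :
    ∃ R : ℕ, ∀ {α : Type u} [DecidableEq α] (c : Sym2 α → Bool) (X : Finset α), R ≤ #X →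
      ∃ b, ∃ S ⊆ X, #S = r b ∧ (S : Set α).Pairwise fun x y ↦ c s(x, y) = b := by
  induction hN : r true + r false using Nat.strong_induction_on generalizing r with
  | _ N ih =>
    by_cases hzero : ∃ b, r b = 0
    · obtain ⟨b, hb⟩ := hzero
      exact ⟨0, fun c X _ ↦ ⟨b, ∅, empty_subset X, by simp [hb], by simp⟩⟩
    push Not at hzero
    have hsmaller : ∀ b, (Function.update r b (r b - 1)) true
        + (Function.update r b (r b - 1)) false < N := by
      intro b
      have := hzero b
      cases b <;> simp <;> omega
    choose R hR using fun b ↦ ih _ (hsmaller b) _ rfl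
    refine ⟨R true + R false + 1, fun {α} _ c X hX ↦ ?_⟩
    obtain ⟨v, hv⟩ : X.Nonempty := card_pos.mp (by omega)
    set nbhd : Bool → Finset α := fun b ↦ {x ∈ X.erase v | c s(v, x) = b}
    have hsplit : #(nbhd true) + #(nbhd false) = #X - 1 := by
      have := card_filter_add_card_filter_not (s := X.erase v) fun x ↦ c s(v, x) = true
      simpa only [Bool.not_eq_true, card_erase_of_mem hv] using this
    obtain ⟨b, hb⟩ : ∃ b, R b ≤ #(nbhd b) := by
      by_contra! h
      have := h true
      have := h false
      omega
    obtain ⟨b', S, hSnbhd, hScard, hSmono⟩ := hR b c (nbhd b) hb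
    have hSX : S ⊆ X.erase v := hSnbhd.trans (filter_subset _ _)
    by_cases hbb' : b' = b
    · subst hbb'
      refine ⟨b', insert v S, insert_subset hv (hSX.trans (erase_subset v X)), ?_, ?_⟩
      · rw [card_insert_of_notMem fun h ↦ notMem_erase v X (hSX h), hScard,
          Function.update_self]
        have := hzero b'
        omega
      · rw [coe_insert, Set.pairwise_insert]
        refine ⟨hSmono, fun y hy _ ↦ ?_⟩
        rw [Sym2.eq_swap (a := y), and_self]
        exact (mem_filter.mp (hSnbhd hy)).2
    · refine ⟨b', S, hSX.trans (erase_subset v X), ?_, hSmono⟩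
      rwa [Function.update_of_ne hbb'] at hScard

theorem exists_subsets_monochromatic_stars {α : Type*} [DecidableEq α] (c : Sym2 α → Bool)
    (p m : ℕ) (X Y : Finset α) (hY : m ≤ #Y) (hX : p * 2 ^ m ≤ #X) :
    ∃ Y' ⊆ Y, #Y' = m ∧ ∃ X' ⊆ X, p ≤ #X' ∧ ∀ y ∈ Y', ∃ b, ∀ x ∈ X', c s(y, x) = b := by
  induction m generalizing X Y with
  | zero => exact ⟨∅, empty_subset Y, rfl, X, Subset.rfl, by simpa using hX, by simp⟩
  | succ m ih =>
    obtain ⟨y, hy⟩ : Y.Nonempty := card_pos.mp (by omega)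
    obtain ⟨b, hb⟩ : ∃ b, p * 2 ^ m ≤ #{x ∈ X | c s(y, x) = b} := by
      have := card_filter_add_card_filter_not (s := X) fun x ↦ c s(y, x) = true
      simp only [Bool.not_eq_true] at this
      by_contra! h
      have := h true
      have := h false
      rw [pow_succ, ← mul_assoc, mul_two] at hX
      omega
    obtain ⟨Y', hY'Y, hY'card, X', hX'X, hX'card, hstars⟩ :=
      ih _ (Y.erase y) (by rw [card_erase_of_mem hy]; omega) hb
    refine ⟨insert y Y', insert_subset hy (hY'Y.trans (erase_subset y Y)), ?_,
      X', hX'X.trans (filter_subset _ _), hX'card, ?_⟩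
    · rw [card_insert_of_notMem fun h ↦ notMem_erase y Y (hY'Y h), hY'card]
    · intro z hz
      rcases mem_insert.mp hz with rfl | hz
      · exact ⟨b, fun x hx ↦ (mem_filter.mp (hX'X hx)).2⟩
      · exact hstars z hz

theorem half_pow_div_factorial_le_choose {m M : ℕ} (h : 2 * M ≤ m + 2) :
    ((m : ℝ) / 2) ^ M / M.factorial ≤ m.choose M := by
  refine le_trans ?_ (Nat.pow_le_choose M m)
  gcongr
  rw [Nat.cast_sub (by omega)]
  push_cast
  have : (2 * M : ℝ) ≤ m + 2 := by exact_mod_cast h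
  linarith

namespace SimpleGraph

section Copies

variable {V W : Type*} {G : SimpleGraph V} {H : SimpleGraph W}

def colourClass (G : SimpleGraph V) (χ : Sym2 V → Bool) (b : Bool) : SimpleGraph V where
  Adj x y := G.Adj x y ∧ χ s(x, y) = b
  symm := ⟨fun _ y h ↦ ⟨h.1.symm, Sym2.eq_swap (a := y) ▸ h.2⟩⟩
  loopless := ⟨fun x h ↦ G.loopless.irrefl x h.1⟩

theorem colourClass_le (χ : Sym2 V → Bool) (b : Bool) : G.colourClass χ b ≤ G :=
  fun _ _ h ↦ h.1

theorem isClique_colourClass {χ : Sym2 V → Bool} {b : Bool} {s : Set V} (hG : G.IsClique s)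
    (hχ : s.Pairwise fun x y ↦ χ s(x, y) = b) : (G.colourClass χ b).IsClique s :=
  fun _ hx _ hy hxy ↦ ⟨hG hx hy hxy, hχ hx hy hxy⟩

theorem exists_copy_of_isClique [Fintype W] {K : SimpleGraph V} {X : Finset V}
    (hX : K.IsClique (X : Set V)) (hW : Fintype.card W ≤ #X) :
    ∃ f : Copy H K, ∀ a, f a ∈ X := by
  obtain ⟨e⟩ := Function.Embedding.nonempty_of_card_le (hW.trans (Fintype.card_coe X).ge)
  refine ⟨⟨⟨fun a ↦ e a, fun {a c} h ↦ hX (e a).2 (e c).2 ?_⟩, ?_⟩, fun a ↦ (e a).2⟩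
  · exact fun hac ↦ h.ne (e.injective (Subtype.ext hac))
  · exact fun a c hac ↦ e.injective (Subtype.ext hac)

theorem exists_copy_of_isClique_of_forall_adj [Fintype W] [DecidableEq W] [DecidableEq V]
    {K : SimpleGraph V} {I : Finset W} (hI : H.IsIndepSet I) {P Q : Finset V} (hPQ : Disjoint P Q)
    (hQ : K.IsClique (Q : Set V)) (hadj : ∀ x ∈ P, ∀ y ∈ Q, K.Adj x y)
    (hIP : #I ≤ #P) (hIQ : #Iᶜ ≤ #Q) :
    ∃ f : Copy H K, (∀ a ∈ I, f a ∈ P) ∧ ∀ a, f a ∈ P ∪ Q := by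
  obtain ⟨e₁⟩ := Function.Embedding.nonempty_of_card_le
    (by rwa [Fintype.card_coe, Fintype.card_coe] : Fintype.card I ≤ Fintype.card P)
  obtain ⟨e₂⟩ := Function.Embedding.nonempty_of_card_le
    (by rwa [Fintype.card_coe, Fintype.card_coe] : Fintype.card ↥Iᶜ ≤ Fintype.card Q)
  let g (a : W) : V := if h : a ∈ I then e₁ ⟨a, h⟩ else e₂ ⟨a, mem_compl.mpr h⟩
  have hgI : ∀ a ∈ I, g a ∈ P := fun a ha ↦ by simp only [g, dif_pos ha]; exact (e₁ _).2
  have hgIc : ∀ a ∉ I, g a ∈ Q := fun a ha ↦ by simp only [g, dif_neg ha]; exact (e₂ _).2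
  have hg : Function.Injective g := by
    intro a c hac
    by_cases ha : a ∈ I <;> by_cases hc : c ∈ I
    · simp only [g, dif_pos ha, dif_pos hc] at hac
      simpa using e₁.injective (Subtype.ext hac)
    · exact (Finset.disjoint_left.mp hPQ (hgI a ha) (hac ▸ hgIc c hc)).elim
    · exact (Finset.disjoint_left.mp hPQ (hgI c hc) (hac ▸ hgIc a ha)).elim
    · simp only [g, dif_neg ha, dif_neg hc] at hac
      simpa using e₂.injective (Subtype.ext hac)
  have hadj' : ∀ {a c}, H.Adj a c → K.Adj (g a) (g c) := by
    intro a c hac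
    by_cases ha : a ∈ I <;> by_cases hc : c ∈ I
    · exact (hI ha hc hac.ne hac).elim
    · exact hadj _ (hgI a ha) _ (hgIc c hc)
    · exact (hadj _ (hgI c hc) _ (hgIc a ha)).symm
    · exact hQ (hgIc a ha) (hgIc c hc) (hg.ne hac.ne)
  refine ⟨⟨⟨g, hadj'⟩, hg⟩, hgI, fun a ↦ ?_⟩
  by_cases ha : a ∈ I
  · exact mem_union_left _ (hgI a ha)
  · exact mem_union_right _ (hgIc a ha)

variable [Fintype W]

/-- The paper's `(A, Aᶜ)`-good copies of `H`; red is `true` and blue is `false`. -/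
def IsGoodCopy (H : SimpleGraph W) (χ : Sym2 V → Bool) (A : Set V) (F : G.Subgraph) : Prop :=
  Nonempty (H ≃g F.coe) ∧
    ((∀ e ∈ F.edgeSet, χ e = true) ∧ _root_.indepNum H ≤ (F.verts ∩ A).ncard ∨
      (∀ e ∈ F.edgeSet, χ e = false) ∧ _root_.indepNum H ≤ (F.verts ∩ Aᶜ).ncard)

variable {χ : Sym2 V → Bool} {A : Set V}

theorem exists_isGoodCopy_of_copy {b : Bool}
    (f : Copy H (G.colourClass χ b)) {I : Finset W} (hI : #I = _root_.indepNum H)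
    (hside : ∀ a ∈ I, f a ∈ cond b A Aᶜ) {S : Set V} (hS : ∀ a, f a ∈ S) :
    ∃ F : G.Subgraph, IsGoodCopy H χ A F ∧ F.verts ⊆ S ∧ F.verts.ncard = Fintype.card W := by
  have hinj : Function.Injective f := f.injective
  set F := ((Copy.ofLE _ _ (colourClass_le χ b)).comp f).toSubgraph
  have hverts : F.verts = Set.range f := by simp [F, Copy.coe_comp, Set.image_univ]
  have hcolour : ∀ e ∈ F.edgeSet, χ e = b := by
    simp only [F, Subgraph.edgeSet_map, Subgraph.edgeSet_top, Set.mem_image]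
    rintro _ ⟨e, he, rfl⟩
    induction e with
    | h a c => exact (f.toHom.map_adj he).2
  have hindep : _root_.indepNum H ≤ (F.verts ∩ cond b A Aᶜ).ncard := by
    calc _root_.indepNum H = (f '' I).ncard := by
          rw [Set.ncard_image_of_injective _ hinj, Set.ncard_coe_finset, hI]
      _ ≤ (F.verts ∩ cond b A Aᶜ).ncard := by
          refine Set.ncard_le_ncard ?_ ((hverts ▸ Set.finite_range f).inter_of_left _)
          rintro _ ⟨a, ha, rfl⟩
          exact ⟨hverts ▸ Set.mem_range_self a, hside a ha⟩
  have hcard : F.verts.ncard = Fintype.card W := by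
    rw [hverts, Set.ncard_range_of_injective hinj, Nat.card_eq_fintype_card]
  refine ⟨F, ⟨⟨Copy.isoToSubgraph _⟩, ?_⟩, hverts ▸ Set.range_subset_iff.mpr hS, hcard⟩
  cases b
  · exact Or.inr ⟨hcolour, hindep⟩
  · exact Or.inl ⟨hcolour, hindep⟩

theorem exists_isGoodCopy_of_isClique {b : Bool} {X : Finset V}
    (hX : (G.colourClass χ b).IsClique (X : Set V)) (hXA : (X : Set V) ⊆ cond b A Aᶜ)
    (hXcard : Fintype.card W ≤ #X) :
    ∃ F : G.Subgraph, IsGoodCopy H χ A F ∧ F.verts ⊆ X ∧ F.verts.ncard = Fintype.card W := by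
  obtain ⟨I, -, hI⟩ := exists_isIndepSet_card_eq_indepNum H
  obtain ⟨f, hf⟩ := exists_copy_of_isClique (H := H) hX hXcard
  exact exists_isGoodCopy_of_copy f hI (fun a _ ↦ hXA (hf a)) hf

theorem exists_isGoodCopy_of_isClique_of_isClique [DecidableEq V] {X Y : Finset V}
    (hXA : (X : Set V) ⊆ A) (hYA : (Y : Set V) ⊆ Aᶜ)
    (hX : (G.colourClass χ false).IsClique (X : Set V))
    (hY : (G.colourClass χ true).IsClique (Y : Set V)) (hXY : ∀ x ∈ X, ∀ y ∈ Y, G.Adj x y)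
    (hXcard : Fintype.card W * 2 ^ Fintype.card W ≤ #X) (hYcard : Fintype.card W ≤ #Y) :
    ∃ F : G.Subgraph, IsGoodCopy H χ A F ∧ F.verts ⊆ ↑(X ∪ Y) ∧
      F.verts.ncard = Fintype.card W := by
  classical
  set k := Fintype.card W
  obtain ⟨I, hIindep, hI⟩ := exists_isIndepSet_card_eq_indepNum H
  have hIcompl : #I + #Iᶜ = k := card_add_card_compl I
  obtain ⟨Y', hY'Y, hY'card, X', hX'X, hX'card, hstars⟩ :=
    exists_subsets_monochromatic_stars χ k k X Y hYcard hXcard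
  have hdisj : ∀ {P Q : Finset V}, P ⊆ X → Q ⊆ Y → Disjoint P Q := fun hP hQ ↦
    Finset.disjoint_left.mpr fun x hxP hxQ ↦ hYA (hQ hxQ) (hXA (hP hxP))
  set Yr := {y ∈ Y' | ∀ x ∈ X', χ s(y, x) = true}
  set Yb := Y' \ Yr
  have hYb : ∀ y ∈ Yb, ∀ x ∈ X', χ s(y, x) = false := by
    intro y hy
    obtain ⟨hyY', hyYr⟩ := mem_sdiff.mp hy
    obtain ⟨b, hb⟩ := hstars y hyY'
    cases b
    · exact hb
    · exact (hyYr (mem_filter.mpr ⟨hyY', hb⟩)).elim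
  have hsplit : #Yr + #Yb = k := by
    rw [add_comm, card_sdiff_add_card_eq_card (filter_subset _ _), hY'card]
  have hX'k : #I ≤ #X' := by have := indepNum_le_card H; omega
  by_cases hred : #Iᶜ ≤ #Yr
  · have hYrY : Yr ⊆ Y := (filter_subset _ _).trans hY'Y
    obtain ⟨f, hfI, hf⟩ := exists_copy_of_isClique_of_forall_adj (K := G.colourClass χ true)
      hIindep (hdisj hX'X hYrY) (hY.subset (coe_subset.mpr hYrY))
      (fun x hx y hy ↦ ⟨hXY x (hX'X hx) y (hYrY hy), Sym2.eq_swap ▸ (mem_filter.mp hy).2 x hx⟩)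
      hX'k hred
    exact exists_isGoodCopy_of_copy f hI (fun a ha ↦ hXA (hX'X (hfI a ha)))
      fun a ↦ union_subset_union hX'X hYrY (hf a)
  · have hYbY : Yb ⊆ Y := sdiff_subset.trans hY'Y
    obtain ⟨f, hfI, hf⟩ := exists_copy_of_isClique_of_forall_adj (K := G.colourClass χ false)
      hIindep (hdisj hX'X hYbY).symm (hX.subset (coe_subset.mpr hX'X))
      (fun y hy x hx ↦ ⟨(hXY x (hX'X hx) y (hYbY hy)).symm, hYb y hy x hx⟩) (by omega) (by omega)
    exact exists_isGoodCopy_of_copy f hI (fun a ha ↦ hYA (hYbY (hfI a ha)))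
      fun a ↦ union_comm Y X ▸ union_subset_union hYbY hX'X (hf a)

end Copies

theorem exists_bound_isGoodCopy_of_isClique {W : Type*} [Fintype W] (H : SimpleGraph W) :
    ∃ R : ℕ, ∀ {U : Type u} [DecidableEq U] (G : SimpleGraph U) (χ : Sym2 U → Bool) (A : Set U)
      (S₁ S₂ : Finset U), ↑S₁ ⊆ A → ↑S₂ ⊆ Aᶜ → R ≤ #S₁ → R ≤ #S₂ →
      G.IsClique ((S₁ ∪ S₂ : Finset U) : Set U) →
      ∃ F : G.Subgraph, IsGoodCopy H χ A F ∧ F.verts ⊆ ↑(S₁ ∪ S₂) ∧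
        F.verts.ncard = Fintype.card W := by
  set k := Fintype.card W
  obtain ⟨R, hR⟩ := exists_ramsey_bound.{u} fun _ ↦ k * 2 ^ k
  refine ⟨R, fun G χ A S₁ S₂ hS₁ hS₂ h₁ h₂ hG ↦ ?_⟩
  obtain ⟨b₁, X, hXS, hXcard, hXmono⟩ := hR χ S₁ h₁
  obtain ⟨b₂, Y, hYS, hYcard, hYmono⟩ := hR χ S₂ h₂
  have hXS' : X ⊆ S₁ ∪ S₂ := hXS.trans subset_union_left
  have hYS' : Y ⊆ S₁ ∪ S₂ := hYS.trans subset_union_right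
  have hX := isClique_colourClass (hG.subset (coe_subset.mpr hXS')) hXmono
  have hY := isClique_colourClass (hG.subset (coe_subset.mpr hYS')) hYmono
  have hXA : (X : Set _) ⊆ A := (coe_subset.mpr hXS).trans hS₁
  have hYA : (Y : Set _) ⊆ Aᶜ := (coe_subset.mpr hYS).trans hS₂
  have hkT : k ≤ k * 2 ^ k := Nat.le_mul_of_pos_right _ (by positivity)
  cases b₁
  · cases b₂
    · obtain ⟨F, hF, hFY, hFk⟩ := exists_isGoodCopy_of_isClique hY hYA (hYcard ▸ hkT)
      exact ⟨F, hF, hFY.trans (coe_subset.mpr hYS'), hFk⟩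
    · obtain ⟨F, hF, hFXY, hFk⟩ := exists_isGoodCopy_of_isClique_of_isClique hXA hYA hX hY
        (fun x hx y hy ↦ hG (hXS' hx) (hYS' hy) fun h ↦ hYA hy (h ▸ hXA hx))
        hXcard.ge (hYcard ▸ hkT)
      exact ⟨F, hF, hFXY.trans (coe_subset.mpr (union_subset hXS' hYS')), hFk⟩
  · obtain ⟨F, hF, hFX, hFk⟩ := exists_isGoodCopy_of_isClique hX hXA (hXcard ▸ hkT)
    exact ⟨F, hF, hFX.trans (coe_subset.mpr hXS'), hFk⟩

section Counting

variable {V : Type*} [Fintype V] [DecidableEq V]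

def splitPairs (A : Finset V) (M : ℕ) : Finset (Finset V × Finset V) :=
  A.powersetCard M ×ˢ Aᶜ.powersetCard M

theorem mem_splitPairs {A : Finset V} {M : ℕ} {p : Finset V × Finset V} :
    p ∈ splitPairs A M ↔ (p.1 ⊆ A ∧ #p.1 = M) ∧ p.2 ⊆ Aᶜ ∧ #p.2 = M := by
  simp [splitPairs]

theorem card_filter_superset_mul_pow_le (s U : Finset V) (M : ℕ) :
    #{S ∈ s.powersetCard M | U ⊆ S} * Fintype.card V ^ #U ≤ Fintype.card V ^ M := by
  by_cases hU : #U ≤ M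
  · have hinj : #{S ∈ s.powersetCard M | U ⊆ S} ≤ (Fintype.card V).choose (M - #U) := by
      rw [← card_univ, ← card_powersetCard]
      refine card_le_card_of_injOn (· \ U) (fun S hS ↦ ?_) fun S hS S' hS' h ↦ ?_
      · obtain ⟨hS, hUS⟩ := mem_filter.mp hS
        simp [card_sdiff_of_subset hUS, (mem_powersetCard.mp hS).2]
      · rw [← sdiff_union_of_subset (mem_filter.mp hS).2,
          ← sdiff_union_of_subset (mem_filter.mp hS').2]
        exact congrArg (· ∪ U) h
    calc #{S ∈ s.powersetCard M | U ⊆ S} * Fintype.card V ^ #U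
        ≤ Fintype.card V ^ (M - #U) * Fintype.card V ^ #U := by
          gcongr
          exact hinj.trans (Nat.choose_le_pow _ _)
      _ = Fintype.card V ^ M := pow_sub_mul_pow _ hU
  · rw [filter_false_of_mem fun S hS hUS ↦
      hU ((card_le_card hUS).trans (mem_powersetCard.mp hS).2.le)]
    simp

theorem card_filter_splitPairs_superset_mul_pow_le (A U : Finset V) (M : ℕ) :
    #{p ∈ splitPairs A M | U ⊆ p.1 ∪ p.2} * Fintype.card V ^ #U ≤ Fintype.card V ^ (2 * M) := by
  have hsub : {p ∈ splitPairs A M | U ⊆ p.1 ∪ p.2} ⊆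
      {S ∈ A.powersetCard M | U ∩ A ⊆ S} ×ˢ {S ∈ Aᶜ.powersetCard M | U \ A ⊆ S} := by
    intro p hp
    obtain ⟨hp, hU⟩ := mem_filter.mp hp
    obtain ⟨h₁, h₂⟩ := mem_product.mp hp
    have h₁A := (mem_powersetCard.mp h₁).1
    have h₂A := (mem_powersetCard.mp h₂).1
    refine mem_product.mpr ⟨mem_filter.mpr ⟨h₁, fun x hx ↦ ?_⟩, mem_filter.mpr ⟨h₂, fun x hx ↦ ?_⟩⟩
    · obtain ⟨hxU, hxA⟩ := mem_inter.mp hx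
      exact (mem_union.mp (hU hxU)).resolve_right fun h ↦ mem_compl.mp (h₂A h) hxA
    · obtain ⟨hxU, hxA⟩ := mem_sdiff.mp hx
      exact (mem_union.mp (hU hxU)).resolve_left fun h ↦ hxA (h₁A h)
  calc #{p ∈ splitPairs A M | U ⊆ p.1 ∪ p.2} * Fintype.card V ^ #U
      ≤ (#{S ∈ A.powersetCard M | U ∩ A ⊆ S} * Fintype.card V ^ #(U ∩ A)) *
          (#{S ∈ Aᶜ.powersetCard M | U \ A ⊆ S} * Fintype.card V ^ #(U \ A)) := by
        rw [mul_mul_mul_comm, ← pow_add, card_inter_add_card_sdiff, ← card_product]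
        gcongr
    _ ≤ Fintype.card V ^ M * Fintype.card V ^ M := by
        gcongr <;> exact card_filter_superset_mul_pow_le _ _ M
    _ = Fintype.card V ^ (2 * M) := by rw [← pow_add, two_mul]

theorem ncard_edgeSet_compl_add_ncard_edgeSet (G : SimpleGraph V) :
    Gᶜ.edgeSet.ncard + G.edgeSet.ncard = (Fintype.card V).choose 2 := by
  rw [← top_sdiff, edgeSet_sdiff, Set.ncard_sdiff (edgeSet_mono le_top),
    Nat.sub_add_cancel (Set.ncard_le_ncard (edgeSet_mono le_top)), ← coe_edgeFinset,
    Set.ncard_coe_finset, card_edgeFinset_top_eq_card_choose_two]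

variable {G : SimpleGraph V} {A : Finset V} {M : ℕ} {P : Finset (Finset V × Finset V)}

theorem card_mul_pow_le_of_forall_exists_subgraph (hP : P ⊆ splitPairs A M)
    {S : Set G.Subgraph} {k : ℕ}
    (h : ∀ p ∈ P, ∃ F ∈ S, F.verts ⊆ ↑(p.1 ∪ p.2) ∧ F.verts.ncard = k) :
    #P * Fintype.card V ^ k ≤ Fintype.card V ^ (2 * M) * S.ncard := by
  classical
  choose! Φ hΦS hΦsub hΦcard using h
  have hfibre : ∀ F ∈ P.image Φ, #{p ∈ P | Φ p = F} * Fintype.card V ^ k ≤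
      Fintype.card V ^ (2 * M) := by
    intro F hF
    obtain ⟨p₀, hp₀, rfl⟩ := mem_image.mp hF
    set U := (Set.toFinite (Φ p₀).verts).toFinset
    have hU : #U = k := by rw [← Set.ncard_eq_toFinset_card _, hΦcard p₀ hp₀]
    calc #{p ∈ P | Φ p = Φ p₀} * Fintype.card V ^ k
        ≤ #{p ∈ splitPairs A M | U ⊆ p.1 ∪ p.2} * Fintype.card V ^ #U := by
          rw [hU]
          gcongr
          intro p hp
          obtain ⟨hpP, hpF⟩ := mem_filter.mp hp
          refine mem_filter.mpr ⟨hP hpP, fun x hx ↦ ?_⟩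
          exact hΦsub p hpP (hpF ▸ (Set.toFinite (Φ p₀).verts).mem_toFinset.mp hx)
      _ ≤ Fintype.card V ^ (2 * M) := card_filter_splitPairs_superset_mul_pow_le A U M
  calc #P * Fintype.card V ^ k
      = ∑ F ∈ P.image Φ, #{p ∈ P | Φ p = F} * Fintype.card V ^ k := by
        rw [card_eq_sum_card_image Φ P, sum_mul]
    _ ≤ ∑ F ∈ P.image Φ, Fintype.card V ^ (2 * M) := sum_le_sum hfibre
    _ = Fintype.card V ^ (2 * M) * #(P.image Φ) := by rw [sum_const, smul_eq_mul, mul_comm]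
    _ ≤ Fintype.card V ^ (2 * M) * S.ncard := by
        gcongr
        rw [← Set.ncard_coe_finset]
        refine Set.ncard_le_ncard ?_ (Set.toFinite S)
        intro F hF
        obtain ⟨p, hp, rfl⟩ := mem_image.mp hF
        exact hΦS p hp

theorem card_mul_sq_le_of_forall_not_isClique (hP : P ⊆ splitPairs A M)
    (h : ∀ p ∈ P, ¬ G.IsClique (↑(p.1 ∪ p.2) : Set V)) :
    #P * Fintype.card V ^ 2 ≤ Gᶜ.edgeSet.ncard * Fintype.card V ^ (2 * M) := by
  classical
  have hcover :
      P ⊆ Gᶜ.edgeFinset.biUnion fun e ↦ {p ∈ splitPairs A M | e.toFinset ⊆ p.1 ∪ p.2} := by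
    intro p hp
    obtain ⟨x, hx, y, hy, hxy, hnadj⟩ : ∃ x ∈ p.1 ∪ p.2, ∃ y ∈ p.1 ∪ p.2, x ≠ y ∧ ¬ G.Adj x y := by
      simpa [IsClique, Set.Pairwise] using h p hp
    refine mem_biUnion.mpr ⟨s(x, y), ?_, mem_filter.mpr ⟨hP hp, ?_⟩⟩
    · simpa [compl_adj] using ⟨hxy, hnadj⟩
    · intro v hv
      rcases Sym2.mem_iff.mp (Sym2.mem_toFinset.mp hv) with rfl | rfl <;> assumption
  have hpair : ∀ e ∈ Gᶜ.edgeFinset, #e.toFinset = 2 := fun e he ↦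
    Sym2.card_toFinset_of_not_isDiag e (Gᶜ.not_isDiag_of_mem_edgeSet (mem_edgeFinset.mp he))
  calc #P * Fintype.card V ^ 2
      ≤ ∑ e ∈ Gᶜ.edgeFinset,
          #{p ∈ splitPairs A M | e.toFinset ⊆ p.1 ∪ p.2} * Fintype.card V ^ 2 := by
        rw [← sum_mul]
        gcongr
        exact (card_le_card hcover).trans card_biUnion_le
    _ ≤ ∑ e ∈ Gᶜ.edgeFinset, Fintype.card V ^ (2 * M) := by
        refine sum_le_sum fun e he ↦ ?_
        have := card_filter_splitPairs_superset_mul_pow_le A e.toFinset M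
        rwa [hpair e he] at this
    _ = Gᶜ.edgeSet.ncard * Fintype.card V ^ (2 * M) := by
        rw [sum_const, smul_eq_mul, ← coe_edgeFinset, Set.ncard_coe_finset]

theorem pow_div_le_card_splitPairs (hA : 2 * #A = Fintype.card V)
    (hM : 4 * M ≤ Fintype.card V) :
    (Fintype.card V : ℝ) ^ (2 * M) / (16 ^ M * (M.factorial : ℝ) ^ 2) ≤ #(splitPairs A M) := by
  have hAc : #Aᶜ = #A := by rw [card_compl]; omega
  have hchoose := half_pow_div_factorial_le_choose (m := #A) (M := M) (by omega)
  have hA' : (#A : ℝ) = Fintype.card V / 2 := by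
    rw [← hA]; push_cast; ring
  rw [splitPairs, card_product, card_powersetCard, card_powersetCard, hAc, Nat.cast_mul]
  calc (Fintype.card V : ℝ) ^ (2 * M) / (16 ^ M * (M.factorial : ℝ) ^ 2)
      = ((#A : ℝ) / 2) ^ M / M.factorial * (((#A : ℝ) / 2) ^ M / M.factorial) := by
        rw [hA', div_div, div_pow, two_mul, pow_add,
          show (16 : ℝ) ^ M = (2 * 2) ^ M * (2 * 2) ^ M by rw [← mul_pow]; norm_num]
        field_simp
    _ ≤ _ := by gcongr

variable {η : ℝ}

open scoped Classical in
theorem mul_pow_le_card_filter_isClique (hn : 0 < Fintype.card V)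
    (hA : 2 * #A = Fintype.card V) (hM : 4 * M ≤ Fintype.card V)
    (hη : 2 * η * 16 ^ M * (M.factorial : ℝ) ^ 2 = 1)
    (hG : (1 - η) * ((Fintype.card V).choose 2 : ℝ) ≤ G.edgeSet.ncard) :
    η * (Fintype.card V : ℝ) ^ (2 * M) ≤
      #{p ∈ splitPairs A M | G.IsClique ((p.1 ∪ p.2 : Finset V) : Set V)} := by
  have hsplit := card_filter_add_card_filter_not (s := splitPairs A M)
    fun p ↦ G.IsClique ((p.1 ∪ p.2 : Finset V) : Set V)
  have hbad := card_mul_sq_le_of_forall_not_isClique (G := G) (A := A) (M := M)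
    (filter_subset _ _) fun p hp ↦ (mem_filter.mp hp).2
  set n := Fintype.card V
  have h2η : 2 * η = 1 / (16 ^ M * (M.factorial : ℝ) ^ 2) := by
    rw [eq_div_iff (by positivity), ← hη]
    ring
  have hpairs : 2 * η * n ^ (2 * M) ≤ #(splitPairs A M) := by
    rw [h2η, one_div_mul_eq_div]
    exact pow_div_le_card_splitPairs hA hM
  have hnonedges : (Gᶜ.edgeSet.ncard : ℝ) ≤ η * n ^ 2 := by
    have hcompl : (Gᶜ.edgeSet.ncard : ℝ) + G.edgeSet.ncard = n.choose 2 := by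
      exact_mod_cast ncard_edgeSet_compl_add_ncard_edgeSet G
    have hchoose : (n.choose 2 : ℝ) ≤ n ^ 2 := by exact_mod_cast Nat.choose_le_pow n 2
    have hη0 : 0 ≤ 2 * η := by rw [h2η]; positivity
    nlinarith
  have hbad' : (#{p ∈ splitPairs A M | ¬G.IsClique ((p.1 ∪ p.2 : Finset V) : Set V)} : ℝ) ≤
      η * n ^ (2 * M) := by
    refine le_of_mul_le_mul_right ?_ (by positivity : (0 : ℝ) < n ^ 2)
    calc _ ≤ (Gᶜ.edgeSet.ncard : ℝ) * n ^ (2 * M) := by exact_mod_cast hbad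
      _ ≤ η * n ^ 2 * n ^ (2 * M) := by gcongr
      _ = η * n ^ (2 * M) * n ^ 2 := by ring
  have hsplit' : (#{p ∈ splitPairs A M | G.IsClique ((p.1 ∪ p.2 : Finset V) : Set V)} : ℝ) +
      #{p ∈ splitPairs A M | ¬G.IsClique ((p.1 ∪ p.2 : Finset V) : Set V)} =
        #(splitPairs A M) := by
    exact_mod_cast hsplit
  linarith

theorem mul_pow_le_ncard_of_forall_isClique (hn : 0 < Fintype.card V)
    (hA : 2 * #A = Fintype.card V) (hM : 4 * M ≤ Fintype.card V)
    (hη : 2 * η * 16 ^ M * (M.factorial : ℝ) ^ 2 = 1)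
    (hG : (1 - η) * ((Fintype.card V).choose 2 : ℝ) ≤ G.edgeSet.ncard)
    {S : Set G.Subgraph} {k : ℕ} (h : ∀ p ∈ splitPairs A M,
      G.IsClique ((p.1 ∪ p.2 : Finset V) : Set V) →
        ∃ F ∈ S, F.verts ⊆ ↑(p.1 ∪ p.2) ∧ F.verts.ncard = k) :
    η * (Fintype.card V : ℝ) ^ k ≤ S.ncard := by
  classical
  have hcopies := card_mul_pow_le_of_forall_exists_subgraph (S := S) (filter_subset _ _)
    fun p hp ↦ h p (mem_filter.mp hp).1 (mem_filter.mp hp).2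
  refine le_of_mul_le_mul_left ?_ (by positivity : (0 : ℝ) < Fintype.card V ^ (2 * M))
  calc (Fintype.card V : ℝ) ^ (2 * M) * (η * Fintype.card V ^ k)
      = η * Fintype.card V ^ (2 * M) * Fintype.card V ^ k := by ring
    _ ≤ #{p ∈ splitPairs A M | G.IsClique ((p.1 ∪ p.2 : Finset V) : Set V)} *
          Fintype.card V ^ k := by
        gcongr
        exact mul_pow_le_card_filter_isClique hn hA hM hη hG
    _ ≤ Fintype.card V ^ (2 * M) * S.ncard := by exact_mod_cast hcopies

end Counting

end SimpleGraph

/-- Supersaturation for `(A,B)`-good copies of `H`: for every graph `H` on `k`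
vertices there is `η > 0` such that for all sufficiently large `n`, every graph `G` on
`n` vertices with at least `(1-η)·C(n,2)` edges, every balanced partition `A ∪ Aᶜ` of the
vertex set, and every red(`true`)/blue(`false`) colouring of the edges, there are at
least `η n^k` copies of `H` in `G` that are either entirely red with at least `α(H)`
vertices in `A`, or entirely blue with at least `α(H)` vertices in `Aᶜ`. -/
theorem stmt8 {W : Type*} [Fintype W] (H : SimpleGraph W) (k : ℕ)
    (hk : Fintype.card W = k) :
    ∃ η : ℝ, 0 < η ∧ ∃ n₀ : ℕ, ∀ n : ℕ, n₀ ≤ n →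
      ∀ G : SimpleGraph (Fin n),
        (1 - η) * (n.choose 2 : ℝ) ≤ (G.edgeSet.ncard : ℝ) →
      ∀ A : Finset (Fin n), 2 * A.card = n →
      ∀ χ : Sym2 (Fin n) → Bool,
        η * (n : ℝ) ^ k ≤
          (({F : G.Subgraph | Nonempty (H ≃g F.coe) ∧
            ((∀ e ∈ F.edgeSet, χ e = true) ∧ _root_.indepNum H ≤ (F.verts ∩ ↑A).ncard ∨
             (∀ e ∈ F.edgeSet, χ e = false) ∧
               _root_.indepNum H ≤ (F.verts ∩ (↑A : Set (Fin n))ᶜ).ncard)}).ncard : ℝ) := by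
  subst hk
  obtain ⟨R, hR⟩ := exists_bound_isGoodCopy_of_isClique H
  set M := R + 1
  -- `C(n/2, M) ≥ (n/4)^M / M!`, so there are at least `2η n^{2M}` split pairs.
  set η : ℝ := 1 / (2 * 16 ^ M * (M.factorial : ℝ) ^ 2)
  have hη : 2 * η * 16 ^ M * (M.factorial : ℝ) ^ 2 = 1 := by
    simp only [η]
    field_simp
  refine ⟨η, by positivity, 4 * M, fun n hn G hG A hA χ ↦ ?_⟩
  have key := mul_pow_le_ncard_of_forall_isClique (G := G) (A := A) (M := M)
    (S := {F : G.Subgraph | IsGoodCopy H χ ↑A F}) (by simp only [Fintype.card_fin]; omega)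
    (by simpa using hA) (by simpa using hn) hη (by simpa using hG) fun p hp hclique ↦ by
      obtain ⟨⟨h₁A, h₁⟩, h₂A, h₂⟩ := mem_splitPairs.mp hp
      exact hR G χ ↑A p.1 p.2 (coe_subset.mpr h₁A) (by simpa using coe_subset.mpr h₂A)
        (by omega) (by omega) hclique
  rwa [Fintype.card_fin] at key
end

section
/- Let ε > 0, let n be divisible appropriately, and let G be an n-vertex 2-edge-coloured graph such that (a) every vertex subset U with |U| ≥ εn contains a monochromatic triangle, and (b) G is (K_3, 4εn)-rich. Then G contains a monochromatic K_3-tiling with at least n/5 - εn triangles. -/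
open SimpleGraph

/-- `t` is a monochromatic triangle of colour `col` (red = `true`, blue = `false`). -/
def IsMonoTriangle {V : Type*} (G : SimpleGraph V) (χ : Sym2 V → Bool) (col : Bool)
    (t : Finset V) : Prop :=
  t.card = 3 ∧ ∀ x ∈ t, ∀ y ∈ t, x ≠ y → G.Adj x y ∧ χ s(x, y) = col

/-- `G` is `(K₃, s)`-rich: for every 2-colouring of its edges and every pair of disjoint
`s`-sets `X`, `Y`, there is a red triangle in `G[X ∪ Y]` meeting `X` or a blue triangle
in `G[X ∪ Y]` meeting `Y`. -/
def IsRich3 {V : Type*} [DecidableEq V] (G : SimpleGraph V) (s : ℕ) : Prop :=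
  ∀ χ : Sym2 V → Bool, ∀ X Y : Finset V, Disjoint X Y → X.card = s → Y.card = s →
    (∃ t : Finset V, IsMonoTriangle G χ true t ∧ ↑t ⊆ (↑X ∪ ↑Y : Set V) ∧
      (t ∩ X).Nonempty) ∨
    (∃ t : Finset V, IsMonoTriangle G χ false t ∧ ↑t ⊆ (↑X ∪ ↑Y : Set V) ∧
      (t ∩ Y).Nonempty)

/-!
Take a maximal family `F` of vertex-disjoint bow ties and let `W` be the set of vertices
they miss, so that no red triangle inside `W` meets a blue one. Using (a), greedily pack
`W` with monochromatic triangles until fewer than `εn` vertices are left, and split the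
packing into its red part `R` and blue part `B`. If both covered at least `s = ⌊4εn⌋`
vertices, (b) applied to an `s`-set covered by `B` and one covered by `R` would yield a red
triangle meeting a blue one inside `W`. So one part, say `B`, has `3|B| < s`, and the red
triangles of the bow ties together with `R` form a red tiling of size `|F| + |R|`, where
`n = |W| + 5|F| < 3|R| + 3|B| + εn + 5|F| < 5(|F| + |R|) + 5εn`.
-/

open Finset

section Packing

variable {ι V : Type*} [DecidableEq ι] [DecidableEq V]

theorem exists_maximal_packing (P : ι → Prop) (f : ι → Finset V)
    (hf : ∀ i, P i → (f i).Nonempty) (W : Finset V) :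
    ∃ F : Finset ι, (∀ i ∈ F, P i ∧ f i ⊆ W) ∧ (F : Set ι).PairwiseDisjoint f ∧
      ∀ i, P i → ¬f i ⊆ W \ F.biUnion f := by
  induction W using Finset.strongInduction with
  | _ W ih =>
    by_cases hfit : ∃ i, P i ∧ f i ⊆ W
    · obtain ⟨i, hi, hiW⟩ := hfit
      obtain ⟨F, hF, hFd, hFmax⟩ := ih (W \ f i) (sdiff_ssubset hiW (hf i hi))
      have hsep : ∀ j ∈ F, Disjoint (f i) (f j) := fun j hj =>
        (subset_sdiff.1 (hF j hj).2).2.symm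
      refine ⟨insert i F, ?_, ?_, ?_⟩
      · intro j hj
        rcases mem_insert.1 hj with rfl | hj
        · exact ⟨hi, hiW⟩
        · exact ⟨(hF j hj).1, (hF j hj).2.trans sdiff_subset⟩
      · rw [coe_insert]
        exact hFd.insert fun j hj _ => hsep j hj
      · rwa [biUnion_insert, sdiff_union_distrib, ← Finset.sdiff_sdiff_left']
    · refine ⟨∅, by simp, by simp, fun i hi hiW => hfit ⟨i, hi, by simpa using hiW⟩⟩

end Packing

variable {V : Type*} {G : SimpleGraph V} {χ : Sym2 V → Bool} {c c' : Bool}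
  {t u : Finset V}

theorem IsMonoTriangle.nonempty (ht : IsMonoTriangle G χ c t) : t.Nonempty :=
  card_pos.1 (by rw [ht.1]; norm_num)

theorem IsMonoTriangle.card_inter_le_one [DecidableEq V] (ht : IsMonoTriangle G χ c t)
    (hu : IsMonoTriangle G χ c' u) (hc : c ≠ c') : (t ∩ u).card ≤ 1 := by
  refine card_le_one.2 fun x hx y hy => ?_
  by_contra hxy
  rw [mem_inter] at hx hy
  exact hc ((ht.2 x hx.1 y hy.1 hxy).2.symm.trans (hu.2 x hx.2 y hy.2 hxy).2)

theorem IsMonoTriangle.colour_eq (ht : IsMonoTriangle G χ c t)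
    (ht' : IsMonoTriangle G χ c' t) : c = c' := by
  classical
  by_contra hc
  have := ht.card_inter_le_one ht' hc
  rw [inter_self, ht.1] at this
  omega

variable (G χ) in
def IsMonoTiling (col : Bool) (T : Finset (Finset V)) : Prop :=
  (∀ t ∈ T, IsMonoTriangle G χ col t) ∧ (T : Set (Finset V)).PairwiseDisjoint id

theorem IsMonoTiling.card_biUnion [DecidableEq V] {T : Finset (Finset V)}
    (hT : IsMonoTiling G χ c T) : (T.biUnion id).card = 3 * T.card := by
  rw [Finset.card_biUnion hT.2]
  exact (sum_const_nat fun t ht => (hT.1 t ht).1).trans (mul_comm _ _)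

theorem IsMonoTiling.exists_fin_indexing {T : Finset (Finset V)} (hT : IsMonoTiling G χ c T) :
    ∃ f : Fin T.card → Finset V, (∀ i, IsMonoTriangle G χ c (f i)) ∧
      ∀ i j, i ≠ j → Disjoint (f i) (f j) :=
  ⟨fun i => T.equivFin.symm i, fun i => hT.1 _ (T.equivFin.symm i).2,
    fun i j hij => hT.2 (T.equivFin.symm i).2 (T.equivFin.symm j).2
      fun h => hij (T.equivFin.symm.injective (Subtype.ext h))⟩

theorem IsMonoTiling.exists_extend {ι : Type*} [DecidableEq V] {F : Finset ι}
    {f g : ι → Finset V} {T : Finset (Finset V)} (hF : (F : Set ι).PairwiseDisjoint f)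
    (hg : ∀ i ∈ F, IsMonoTriangle G χ c (g i) ∧ g i ⊆ f i) (hT : IsMonoTiling G χ c T)
    (hFT : ∀ t ∈ T, Disjoint (F.biUnion f) t) :
    ∃ A, IsMonoTiling G χ c A ∧ A.card = F.card + T.card := by
  have hinj : Set.InjOn g F := by
    refine fun i hi j hj hij => hF.elim hi hj fun hd => ?_
    have hgd := hd.mono (hg i hi).2 (hg j hj).2
    rw [hij, disjoint_self] at hgd
    exact (hg j hj).1.nonempty.ne_empty hgd
  have hsep : ∀ i ∈ F, ∀ t ∈ T, Disjoint (g i) t := fun i hi t ht =>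
    ((hFT t ht).mono_left (subset_biUnion_of_mem f hi)).mono_left (hg i hi).2
  have hdisj : Disjoint (F.image g) T := by
    refine disjoint_left.2 fun t ht htT => ?_
    obtain ⟨i, hi, rfl⟩ := mem_image.1 ht
    exact (hT.1 _ htT).nonempty.ne_empty (disjoint_self.1 (hsep i hi _ htT))
  refine ⟨F.image g ∪ T, ⟨?_, ?_⟩, ?_⟩
  · intro t ht
    rcases mem_union.1 ht with ht | ht
    · obtain ⟨i, hi, rfl⟩ := mem_image.1 ht
      exact (hg i hi).1
    · exact hT.1 t ht
  · rw [coe_union, Set.pairwiseDisjoint_union, coe_image, hinj.pairwiseDisjoint_image]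
    refine ⟨hF.mono_on fun i hi => (hg i hi).2, hT.2, ?_⟩
    rintro _ ht t htT -
    obtain ⟨i, hi, rfl⟩ := ht
    exact hsep i hi t htT
  · rw [card_union_of_disjoint hdisj, card_image_of_injOn hinj]

variable (G χ) in
def IsBowTie [DecidableEq V] (p : Finset V × Finset V) : Prop :=
  IsMonoTriangle G χ true p.1 ∧ IsMonoTriangle G χ false p.2 ∧ (p.1 ∩ p.2).card = 1

theorem IsBowTie.card_union [DecidableEq V] {p : Finset V × Finset V} (hp : IsBowTie G χ p) :
    (p.1 ∪ p.2).card = 5 := by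
  have := card_union_add_card_inter p.1 p.2
  rw [hp.1.1, hp.2.1.1, hp.2.2] at this
  omega

variable (G χ) in
def IsBowTieFree (W : Finset V) : Prop :=
  ∀ t u, IsMonoTriangle G χ true t → IsMonoTriangle G χ false u → t ⊆ W → u ⊆ W →
    Disjoint t u

theorem isBowTieFree_of_forall_not_subset [DecidableEq V] {W : Finset V}
    (h : ∀ p, IsBowTie G χ p → ¬p.1 ∪ p.2 ⊆ W) : IsBowTieFree G χ W := by
  intro t u ht hu htW huW
  by_contra htu
  refine h (t, u) ⟨ht, hu, le_antisymm (ht.card_inter_le_one hu (by decide)) ?_⟩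
    (union_subset htW huW)
  exact card_pos.2 (not_disjoint_iff_nonempty_inter.1 htu)

theorem exists_red_blue_tilings [DecidableEq V] {r : ℝ}
    (ha : ∀ U : Set V, r ≤ U.ncard → ∃ col t, IsMonoTriangle G χ col t ∧ ↑t ⊆ U)
    (W : Finset V) :
    ∃ R B, IsMonoTiling G χ true R ∧ IsMonoTiling G χ false B ∧ (∀ t ∈ R, t ⊆ W) ∧
      (∀ t ∈ B, t ⊆ W) ∧ (W.card : ℝ) < 3 * (R.card + B.card) + r := by
  classical
  obtain ⟨T, hT, hTd, hTmax⟩ := exists_maximal_packing (fun t => ∃ c, IsMonoTriangle G χ c t)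
    id (fun _ ⟨_, ht⟩ => ht.nonempty) W
  have hrest : ((W \ T.biUnion id).card : ℝ) < r := by
    by_contra! hr
    obtain ⟨c, t, ht, htW⟩ := ha _ (by rwa [Set.ncard_coe_finset])
    exact hTmax t ⟨c, ht⟩ (coe_subset.1 htW)
  have hcover : (T.biUnion id).card = 3 * T.card := by
    rw [Finset.card_biUnion hTd]
    exact (sum_const_nat fun t ht => (hT t ht).1.choose_spec.1).trans (mul_comm _ _)
  have hsplit : T.card = {t ∈ T | IsMonoTriangle G χ true t}.card +
      {t ∈ T | IsMonoTriangle G χ false t}.card := by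
    rw [← card_filter_add_card_filter_not (IsMonoTriangle G χ true)]
    congr 2
    refine filter_congr fun t ht => ?_
    obtain ⟨c, hc⟩ := (hT t ht).1
    refine ⟨fun hred => ?_, fun hblue hred => absurd (hblue.colour_eq hred) (by decide)⟩
    cases c
    · exact hc
    · exact absurd hc hred
  have hW := card_sdiff_add_card_eq_card (biUnion_subset.2 fun t ht => (hT t ht).2)
  have hmono (c : Bool) : IsMonoTiling G χ c {t ∈ T | IsMonoTriangle G χ c t} :=
    ⟨fun _ ht => (mem_filter.1 ht).2, hTd.subset (coe_subset.2 (filter_subset _ _))⟩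
  refine ⟨_, _, hmono true, hmono false,
    fun t ht => (hT t (mem_filter.1 ht).1).2, fun t ht => (hT t (mem_filter.1 ht).1).2, ?_⟩
  rw [← hW, hcover, hsplit]
  push_cast
  linarith

theorem IsRich3.three_mul_card_lt [DecidableEq V] {s : ℕ} (hb : IsRich3 G s) {W : Finset V}
    (hW : IsBowTieFree G χ W) {R B : Finset (Finset V)} (hR : IsMonoTiling G χ true R)
    (hB : IsMonoTiling G χ false B) (hRW : ∀ t ∈ R, t ⊆ W) (hBW : ∀ t ∈ B, t ⊆ W) :
    3 * R.card < s ∨ 3 * B.card < s := by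
  by_contra! hlarge
  rw [← hR.card_biUnion, ← hB.card_biUnion] at hlarge
  obtain ⟨X, hX, hXs⟩ := exists_subset_card_eq hlarge.2
  obtain ⟨Y, hY, hYs⟩ := exists_subset_card_eq hlarge.1
  have hXYW : X ∪ Y ⊆ W := union_subset (hX.trans (biUnion_subset.2 hBW))
    (hY.trans (biUnion_subset.2 hRW))
  have hXY : Disjoint X Y := by
    refine (disjoint_biUnion_left _ _ _).2 (fun u hu => ?_) |>.mono_left hX |>.mono_right hY
    exact (disjoint_biUnion_right _ _ _).2 fun t ht =>
      (hW t u (hR.1 t ht) (hB.1 u hu) (hRW t ht) (hBW u hu)).symm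
  rcases hb χ X Y hXY hXs hYs with ⟨t, ht, htXY, v, hv⟩ | ⟨t, ht, htXY, v, hv⟩
  all_goals
    rw [← coe_union, coe_subset] at htXY
    rw [mem_inter] at hv
  · obtain ⟨u, hu, hvu⟩ := mem_biUnion.1 (hX hv.2)
    exact disjoint_left.1 (hW t u ht (hB.1 u hu) (htXY.trans hXYW) (hBW u hu)) hv.1 hvu
  · obtain ⟨u, hu, hvu⟩ := mem_biUnion.1 (hY hv.2)
    exact disjoint_left.1 (hW u t (hR.1 u hu) ht (hRW u hu) (htXY.trans hXYW)) hvu hv.1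

theorem exists_large_isMonoTiling [Fintype V] [DecidableEq V] {r : ℝ} {s : ℕ}
    (ha : ∀ U : Set V, r ≤ U.ncard → ∃ col t, IsMonoTriangle G χ col t ∧ ↑t ⊆ U)
    (hb : IsRich3 G s) :
    ∃ col T, IsMonoTiling G χ col T ∧ (Fintype.card V : ℝ) < 5 * T.card + s + r := by
  obtain ⟨F, hF, hFd, hFmax⟩ := exists_maximal_packing (IsBowTie G χ) (fun p => p.1 ∪ p.2)
    (fun _ hp => hp.1.nonempty.mono subset_union_left) univ
  set W := univ \ F.biUnion fun p => p.1 ∪ p.2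
  have hfree : IsBowTieFree G χ W := isBowTieFree_of_forall_not_subset hFmax
  have hsep (t) (ht : t ⊆ W) : Disjoint (F.biUnion fun p => p.1 ∪ p.2) t :=
    (sdiff_disjoint.mono_left ht).symm
  have hcard : Fintype.card V = W.card + 5 * F.card := by
    rw [← card_univ, ← card_sdiff_add_card_eq_card (subset_univ (F.biUnion _)),
      Finset.card_biUnion hFd, sum_const_nat fun p hp => (hF p hp).1.card_union, mul_comm]
  obtain ⟨R, B, hR, hB, hRW, hBW, hW⟩ := exists_red_blue_tilings ha W
  rcases hb.three_mul_card_lt hfree hR hB hRW hBW with hsmall | hsmall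
  · obtain ⟨A, hA, hAcard⟩ := hB.exists_extend hFd
      (fun p hp => ⟨(hF p hp).1.2.1, subset_union_right⟩) fun t ht => hsep t (hBW t ht)
    refine ⟨false, A, hA, ?_⟩
    rw [hcard, hAcard]
    have : (3 * R.card : ℝ) < s := by exact_mod_cast hsmall
    push_cast
    linarith
  · obtain ⟨A, hA, hAcard⟩ := hR.exists_extend hFd
      (fun p hp => ⟨(hF p hp).1.1, subset_union_left⟩) fun t ht => hsep t (hRW t ht)
    refine ⟨true, A, hA, ?_⟩
    rw [hcard, hAcard]
    have : (3 * B.card : ℝ) < s := by exact_mod_cast hsmall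
    push_cast
    linarith

/-- If every vertex subset of size at least `εn` of the 2-edge-coloured `n`-vertex graph
`G` contains a monochromatic triangle, and `G` is `(K₃, 4εn)`-rich, then `G` contains a
monochromatic `K₃`-tiling with at least `n/5 - εn` triangles. -/
theorem stmt16 (ε : ℝ) (hε : 0 < ε) (n : ℕ) (G : SimpleGraph (Fin n))
    (χ : Sym2 (Fin n) → Bool)
    (ha : ∀ U : Set (Fin n), ε * n ≤ (U.ncard : ℝ) →
      ∃ (col : Bool) (t : Finset (Fin n)), IsMonoTriangle G χ col t ∧ ↑t ⊆ U)
    (hb : IsRich3 G (Nat.floor (4 * ε * n))) :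
    ∃ (col : Bool) (m : ℕ) (f : Fin m → Finset (Fin n)),
      (∀ i, IsMonoTriangle G χ col (f i)) ∧
      (∀ i j, i ≠ j → Disjoint (f i) (f j)) ∧
      (n : ℝ) / 5 - ε * n ≤ (m : ℝ) := by
  obtain ⟨col, T, hT, hcard⟩ := exists_large_isMonoTiling ha hb
  obtain ⟨f, hf, hfd⟩ := hT.exists_fin_indexing
  refine ⟨col, T.card, f, hf, hfd, ?_⟩
  have hs : (Nat.floor (4 * ε * n) : ℝ) ≤ 4 * ε * n := Nat.floor_le (by positivity)
  rw [Fintype.card_fin] at hcard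
  linarith
end
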